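/- For every n ∈ ℕ, b_n ≤ h_n' ≤ h_n'' ≤ 2^{n−1}·b_n. -/

import Mathlib

/-- The weight of a set system: the sum of edge sizes, counted with multiplicity. -/
def sysWeight (H : Multiset (Finset ℕ)) : ℕ := (H.map Finset.card).sum

/-- A set system is normalized if all its edges are nonempty and its vertex set
(the union of its edges) equals `{1, …, m}` for some `m`. -/
def IsNormalized (H : Multiset (Finset ℕ)) : Prop :=
  (∀ E ∈ H, E.Nonempty) ∧ ∃ m : ℕ, H.sup = Finset.Icc 1 m

/-- `hpp n` = `hₙ''`, the number of normalized set systems (multisets of edges allowed)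
of weight `n`. -/
noncomputable def hpp (n : ℕ) : ℕ :=
  Nat.card {H : Multiset (Finset ℕ) // IsNormalized H ∧ sysWeight H = n}

/-- `hp n` = `hₙ'`, the number of simple (no repeated edges) normalized set systems
of weight `n`. -/
noncomputable def hp (n : ℕ) : ℕ :=
  Nat.card {H : Multiset (Finset ℕ) // IsNormalized H ∧ sysWeight H = n ∧ H.Nodup}

/-- The `n`-th Bell number: the number of partitions (equivalence relations)
of an `n`-element set. -/
noncomputable def bell (n : ℕ) : ℕ := Nat.card (Setoid (Fin n))

/-!
Sending each block `B` of a partition of `{0, …, n - 1}` to `{j + 1 | j ∈ B}` gives a simple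
normalized system of weight `n`, so `bₙ ≤ hₙ'`. Conversely, list the `n` incidences `v ∈ E` of a
normalized system of weight `n` by increasing vertex. The resulting vertex sequence is
nondecreasing onto `{1, …, m}`, so it starts at `1` and climbs by at most one; hence it is
determined by the set of positions where it climbs, a subset of `{0, …, n - 2}`. Together with
the partition of the positions according to their edge this recovers the system, which gives an
injection into `2ⁿ⁻¹ · bₙ` pairs.
-/

open Finset Function

theorem Nat.eq_add_card_filter_ne_of_step_le_one {f : ℕ → ℕ} {q : ℕ}
    (hf : ∀ i < q, f i ≤ f (i + 1) ∧ f (i + 1) ≤ f i + 1) :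
    f q = f 0 + #{i ∈ range q | f i ≠ f (i + 1)} := by
  induction q with
  | zero => simp
  | succ q ih =>
    obtain ⟨hle, hle'⟩ := hf q q.lt_add_one
    have ih := ih fun i hi => hf i (by omega)
    rw [range_add_one, filter_insert]
    split_ifs with h
    · rw [card_insert_of_notMem (by simp)]
      omega
    · omega

theorem Nat.apply_add_one_le_of_image_Iio_eq_Icc {f : ℕ → ℕ} {n a b : ℕ}
    (hf : MonotoneOn f (Set.Iio n)) (himg : f '' Set.Iio n = Set.Icc a b) {i : ℕ}
    (hi : i + 1 < n) : f (i + 1) ≤ f i + 1 := by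
  have hi' : i ∈ Set.Iio n := by simp only [Set.mem_Iio]; omega
  have hi1 : i + 1 ∈ Set.Iio n := hi
  have hfi : f i ∈ Set.Icc a b := himg ▸ Set.mem_image_of_mem f hi'
  have hfi1 : f (i + 1) ∈ Set.Icc a b := himg ▸ Set.mem_image_of_mem f hi1
  by_contra! hgap
  obtain ⟨j, hj, hfj⟩ : f i + 1 ∈ f '' Set.Iio n := himg ▸ ⟨by grind, by grind⟩
  rcases le_or_gt j i with hji | hij
  · have := hf hj hi' hji
    omega
  · have := hf hi1 hj hij
    omega

theorem Nat.eq_add_card_filter_ne_of_image_Iio_eq_Icc {f : ℕ → ℕ} {n a b : ℕ}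
    (hf : MonotoneOn f (Set.Iio n)) (himg : f '' Set.Iio n = Set.Icc a b) {q : ℕ} (hq : q < n) :
    f q = a + #{i ∈ range q | f i ≠ f (i + 1)} := by
  have h0 : (0 : ℕ) ∈ Set.Iio n := Nat.zero_lt_of_lt hq
  have hf0 : f 0 ∈ Set.Icc a b := himg ▸ Set.mem_image_of_mem f h0
  obtain ⟨j, hj, hfj⟩ : a ∈ f '' Set.Iio n := himg ▸ ⟨le_rfl, hf0.1.trans hf0.2⟩
  have hfa : f 0 = a := le_antisymm (hfj ▸ hf h0 hj j.zero_le) hf0.1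
  rw [← hfa]
  refine Nat.eq_add_card_filter_ne_of_step_le_one fun i hi => ⟨?_, ?_⟩
  · exact hf (show i < n by omega) (show i + 1 < n by omega) i.le_succ
  · exact Nat.apply_add_one_le_of_image_Iio_eq_Icc hf himg (by omega)

theorem Multiset.map_getD_range_length {α : Type*} (L : List α) (d : α) :
    (Finset.range L.length).val.map (L.getD · d) = L := by
  rw [range_val, Multiset.range, Multiset.map_coe]
  congr 1
  exact List.ext_getElem (by simp) fun i _ hi => by simp [hi]

theorem Finset.image_getD_sort {α : Type*} [LinearOrder α] (s : Finset α) (d : α) :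
    (fun q => (s.sort (· ≤ ·)).getD q d) '' Set.Iio #s = s := by
  ext x
  simp only [Set.mem_image, Set.mem_Iio, mem_coe, ← mem_sort (· ≤ ·) (s := s),
    List.mem_iff_getElem, length_sort]
  constructor
  · rintro ⟨q, hq, rfl⟩
    exact ⟨q, by simpa using hq, by simp [*]⟩
  · rintro ⟨q, hq, rfl⟩
    exact ⟨q, by simpa using hq, by simp [hq]⟩

theorem Finset.monotoneOn_getD_sort {α : Type*} [LinearOrder α] (s : Finset α) (d : α) :
    MonotoneOn (fun q => (s.sort (· ≤ ·)).getD q d) (Set.Iio #s) := by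
  intro q hq q' hq' hqq'
  rw [Set.mem_Iio, ← length_sort (· ≤ ·)] at hq hq'
  simp only [List.getD_eq_getElem _ _ hq, List.getD_eq_getElem _ _ hq']
  exact (pairwise_sort s (· ≤ ·)).rel_get_of_le (a := ⟨q, hq⟩) (b := ⟨q', hq'⟩) hqq'

section PartImages

variable {α : Type*} [DecidableEq α]

def partImages {s : Finset α} (P : Finpartition s) (f : α → ℕ) : Multiset (Finset ℕ) :=
  P.parts.val.map (image f)

theorem nonempty_of_mem_partImages {s : Finset α} {P : Finpartition s} {f : α → ℕ}
    {E : Finset ℕ} (hE : E ∈ partImages P f) : E.Nonempty := by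
  obtain ⟨t, ht, rfl⟩ := Multiset.mem_map.1 hE
  exact (P.nonempty_of_mem_parts ht).image f

theorem sup_partImages {s : Finset α} (P : Finpartition s) (f : α → ℕ) :
    (partImages P f).sup = s.image f := by
  conv_rhs => rw [← P.biUnion_parts, biUnion_image]
  rw [partImages, ← sup_def, sup_eq_biUnion]
  rfl

theorem sysWeight_partImages {s : Finset α} (P : Finpartition s) {f : α → ℕ}
    (hf : Injective f) : sysWeight (partImages P f) = #s := by
  rw [sysWeight, partImages, Multiset.map_map, ← P.sum_card_parts]
  simp only [comp_apply, card_image_of_injective _ hf]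
  rfl

theorem nodup_partImages {s : Finset α} (P : Finpartition s) {f : α → ℕ} (hf : Injective f) :
    (partImages P f).Nodup :=
  P.parts.nodup.map (image_injective hf)

theorem partImages_injective {s : Finset α} {f : α → ℕ} (hf : Injective f) :
    Injective fun P : Finpartition s => partImages P f := fun _ _ h =>
  Finpartition.ext (val_injective (Multiset.map_injective (image_injective hf) h))

variable [Fintype α]

theorem Finpartition.eq_of_ofSetoid_eq {s t : Setoid α} [DecidableRel s.r] [DecidableRel t.r]
    (h : ofSetoid s = ofSetoid t) : s = t := by
  ext a b
  rw [← mem_part_ofSetoid_iff_rel, ← mem_part_ofSetoid_iff_rel, h]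

theorem partImages_ofSetoid_ker {β : Type*} [DecidableEq β] (g : α → β)
    [DecidableRel (Setoid.ker g).r] (f : α → ℕ) :
    partImages (Finpartition.ofSetoid (Setoid.ker g)) f
      = (univ.image g).val.map fun b => ({a | g a = b} : Finset α).image f := by
  have hparts : (Finpartition.ofSetoid (Setoid.ker g)).parts
      = (univ.image g).image fun b => ({a | g a = b} : Finset α) := by
    ext t
    simp only [Finpartition.ofSetoid, Finpartition.ofSetSetoid, mem_image, mem_univ, true_and]
    constructor
    · rintro ⟨a, rfl⟩
      exact ⟨g a, ⟨a, rfl⟩, by ext; simp [eq_comm]⟩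
    · rintro ⟨_, ⟨a, rfl⟩, rfl⟩
      exact ⟨a, by ext; simp [eq_comm]⟩
  have hinj : Set.InjOn (fun b => ({a | g a = b} : Finset α)) (univ.image g) := by
    intro b hb b' _ hbb'
    obtain ⟨a, -, rfl⟩ := mem_image.1 hb
    simpa using (Finset.ext_iff.1 hbb' a).1 (by simp)
  rw [partImages, hparts, image_val_of_injOn hinj, Multiset.map_map]
  rfl

end PartImages

theorem Multiset.mem_sup_iff {α : Type*} [DecidableEq α] {H : Multiset (Finset α)} {v : α} :
    v ∈ H.sup ↔ ∃ E ∈ H, v ∈ E := by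
  induction H using Multiset.induction with
  | empty => simp
  | cons E H ih => simp [ih]

noncomputable section Incidences

variable (H : Multiset (Finset ℕ))

/-- The pairs `(v, k)` with `v` in the `k`-th edge of `H.toList`, ordered by vertex first. -/
def incidences : Finset (ℕ ×ₗ ℕ) :=
  ((range H.toList.length).sigma fun k => H.toList.getD k ∅).map
    ⟨fun x => toLex (x.2, x.1), fun ⟨_, _⟩ ⟨_, _⟩ h => by simp_all⟩

theorem toLex_mem_incidences {v k : ℕ} :
    toLex (v, k) ∈ incidences H ↔ k < H.toList.length ∧ v ∈ H.toList.getD k ∅ := by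
  simp only [incidences, mem_map, mem_sigma, mem_range, Sigma.exists]
  constructor
  · rintro ⟨k', v', h, he⟩
    obtain ⟨rfl, rfl⟩ := Prod.mk.inj (toLex.injective he)
    exact h
  · exact fun h => ⟨k, v, h, rfl⟩

theorem card_incidences : #(incidences H) = sysWeight H := by
  rw [incidences, card_map, card_sigma, sysWeight, sum_eq_multiset_sum]
  conv_rhs => rw [← Multiset.coe_toList H, ← Multiset.map_getD_range_length H.toList ∅,
    Multiset.map_map]
  rfl

def incidence (q : ℕ) : ℕ ×ₗ ℕ :=
  ((incidences H).sort (· ≤ ·)).getD q (toLex (0, 0))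

def vertexSeq (q : ℕ) : ℕ := (ofLex (incidence H q)).1

def edgeSeq (q : ℕ) : ℕ := (ofLex (incidence H q)).2

theorem exists_incidence_iff {v k : ℕ} :
    (∃ q < sysWeight H, vertexSeq H q = v ∧ edgeSeq H q = k) ↔
      k < H.toList.length ∧ v ∈ H.toList.getD k ∅ := by
  rw [← toLex_mem_incidences, ← mem_coe, ← image_getD_sort _ (toLex (0, 0)), card_incidences]
  refine exists_congr fun q => and_congr_right fun _ => ?_
  show _ ↔ incidence H q = toLex (v, k)
  rw [← toLex_ofLex (incidence H q), toLex_inj, Prod.ext_iff]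
  rfl

theorem monotoneOn_vertexSeq : MonotoneOn (vertexSeq H) (Set.Iio (sysWeight H)) := by
  rw [← card_incidences]
  exact fun q hq q' hq' h => Prod.Lex.monotone_fst _ _ (monotoneOn_getD_sort _ _ hq hq' h)

theorem image_vertexSeq {m : ℕ} (hH : H.sup = Icc 1 m) :
    vertexSeq H '' Set.Iio (sysWeight H) = Set.Icc 1 m := by
  ext v
  have hmem : v ∈ H.sup ↔ ∃ k, k < H.toList.length ∧ v ∈ H.toList.getD k ∅ := by
    rw [Multiset.mem_sup_iff]
    conv_lhs => rw [← Multiset.coe_toList H]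
    simp only [Multiset.mem_coe, List.mem_iff_getElem]
    constructor
    · rintro ⟨_, ⟨k, hk, rfl⟩, hv⟩
      exact ⟨k, hk, by rwa [List.getD_eq_getElem _ _ hk]⟩
    · rintro ⟨k, hk, hv⟩
      exact ⟨_, ⟨k, hk, rfl⟩, by rwa [List.getD_eq_getElem _ _ hk] at hv⟩
  simp_rw [← coe_Icc, ← hH, mem_coe, hmem, ← exists_incidence_iff]
  simp only [Set.mem_image, Set.mem_Iio]
  constructor
  · rintro ⟨q, hq, rfl⟩
    exact ⟨edgeSeq H q, q, hq, rfl, rfl⟩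
  · rintro ⟨k, q, hq, rfl, -⟩
    exact ⟨q, hq, rfl⟩

theorem image_edgeSeq (hH : ∀ E ∈ H, E.Nonempty) :
    univ.image (fun j : Fin (sysWeight H) => edgeSeq H j) = range H.toList.length := by
  ext k
  simp only [mem_image, mem_univ, true_and, mem_range, Fin.exists_iff]
  constructor
  · rintro ⟨q, hq, rfl⟩
    exact ((exists_incidence_iff H).1 ⟨q, hq, rfl, rfl⟩).1
  · intro hk
    have hedge : H.toList.getD k ∅ ∈ H := by
      rw [List.getD_eq_getElem _ _ hk]
      exact Multiset.mem_toList.1 (List.getElem_mem hk)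
    obtain ⟨v, hv⟩ := hH _ hedge
    obtain ⟨q, hq, -, rfl⟩ := (exists_incidence_iff H).2 ⟨hk, hv⟩
    exact ⟨q, hq, rfl⟩

theorem image_vertexSeq_filter_edgeSeq_eq {k : ℕ} (hk : k < H.toList.length) :
    ({j : Fin (sysWeight H) | edgeSeq H j = k} : Finset _).image (fun j : Fin _ => vertexSeq H j)
      = H.toList.getD k ∅ := by
  ext v
  have hinc := exists_incidence_iff H (v := v) (k := k)
  rw [and_iff_right hk] at hinc
  rw [← hinc]
  simp only [mem_image, mem_filter, mem_univ, true_and, Fin.exists_iff]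
  exact exists_congr fun q => ⟨fun ⟨hq, hk, hv⟩ => ⟨hq, hv, hk⟩, fun ⟨hq, hv, hk⟩ => ⟨hq, hk, hv⟩⟩

end Incidences

def ascents (n : ℕ) (f : ℕ → ℕ) : Finset ℕ := {i ∈ range (n - 1) | f i ≠ f (i + 1)}

def rankAt (S : Finset ℕ) (j : ℕ) : ℕ := 1 + #{i ∈ S | i < j}

theorem rankAt_ascents {f : ℕ → ℕ} {n m : ℕ} (hf : MonotoneOn f (Set.Iio n))
    (himg : f '' Set.Iio n = Set.Icc 1 m) {q : ℕ} (hq : q < n) :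
    rankAt (ascents n f) q = f q := by
  rw [Nat.eq_add_card_filter_ne_of_image_Iio_eq_Icc hf himg hq, rankAt, ascents, filter_filter]
  congr 2
  ext i
  simp only [mem_filter, mem_range]
  omega

theorem partImages_ofSetoid_ker_edgeSeq {H : Multiset (Finset ℕ)} {n : ℕ} (hH : IsNormalized H)
    (hw : sysWeight H = n) [DecidableRel (Setoid.ker fun j : Fin n => edgeSeq H j).r] :
    partImages (Finpartition.ofSetoid (Setoid.ker fun j : Fin n => edgeSeq H j))
      (fun j => rankAt (ascents n (vertexSeq H)) j) = H := by
  subst hw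
  obtain ⟨hne, m, hm⟩ := hH
  rw [partImages_ofSetoid_ker, image_edgeSeq H hne]
  calc (range H.toList.length).val.map _
      = (range H.toList.length).val.map (H.toList.getD · ∅) := by
        refine Multiset.map_congr rfl fun k hk => ?_
        rw [← image_vertexSeq_filter_edgeSeq_eq H (mem_range.1 hk)]
        exact image_congr fun j _ =>
          rankAt_ascents (monotoneOn_vertexSeq H) (image_vertexSeq H hm) j.isLt
    _ = H := by rw [Multiset.map_getD_range_length, Multiset.coe_toList]

instance {α : Type*} [Finite α] : Finite (Setoid α) :=
  Finite.of_injective (fun s : Setoid α => (s : α → α → Prop)) fun _ _ h =>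
    Setoid.ext fun a b => iff_of_eq (congrFun (congrFun h a) b)

noncomputable def encodeNormalized (n : ℕ) (H : {H // IsNormalized H ∧ sysWeight H = n}) :
    (range (n - 1)).powerset × Setoid (Fin n) :=
  (⟨ascents n (vertexSeq H), mem_powerset.2 (filter_subset _ _)⟩,
    Setoid.ker fun j : Fin n => edgeSeq H j)

theorem encodeNormalized_injective (n : ℕ) : Injective (encodeNormalized n) := by
  classical
  rintro ⟨H, hH, hw⟩ ⟨H', hH', hw'⟩ h
  simp only [encodeNormalized, Prod.mk.injEq, Subtype.mk.injEq] at h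
  obtain ⟨hS, hs⟩ := h
  refine Subtype.ext (?_ : H = H')
  rw [← partImages_ofSetoid_ker_edgeSeq hH hw, ← partImages_ofSetoid_ker_edgeSeq hH' hw']
  simp only [hS, hs]

instance (n : ℕ) : Finite {H // IsNormalized H ∧ sysWeight H = n} :=
  Finite.of_injective _ (encodeNormalized_injective n)

def simpleSystemEmbedding (n : ℕ) :
    {H : Multiset (Finset ℕ) // IsNormalized H ∧ sysWeight H = n ∧ H.Nodup} ↪
      {H // IsNormalized H ∧ sysWeight H = n} :=
  Subtype.impEmbedding _ _ fun _ h => ⟨h.1, h.2.1⟩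

instance (n : ℕ) : Finite {H // IsNormalized H ∧ sysWeight H = n ∧ H.Nodup} :=
  Finite.of_injective _ (simpleSystemEmbedding n).injective

theorem image_univ_fin_add_one (n : ℕ) : univ.image (fun j : Fin n => (j : ℕ) + 1) = Icc 1 n := by
  ext x
  simp only [mem_image, mem_univ, true_and, mem_Icc]
  exact ⟨by rintro ⟨j, rfl⟩; omega, fun h => ⟨⟨x - 1, by omega⟩, by simp only; omega⟩⟩

theorem bell_le_hp (n : ℕ) : bell n ≤ hp n := by
  classical
  have hf : Injective fun j : Fin n => (j : ℕ) + 1 := (add_left_injective 1).comp Fin.val_injective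
  let system (s : Setoid (Fin n)) : {H // IsNormalized H ∧ sysWeight H = n ∧ H.Nodup} :=
    ⟨partImages (Finpartition.ofSetoid s) fun j => (j : ℕ) + 1,
      ⟨fun _ => nonempty_of_mem_partImages, n, by rw [sup_partImages, image_univ_fin_add_one]⟩,
      by rw [sysWeight_partImages _ hf, card_univ, Fintype.card_fin], nodup_partImages _ hf⟩
  exact Nat.card_le_card_of_injective system fun s t hst =>
    Finpartition.eq_of_ofSetoid_eq (partImages_injective hf (congrArg Subtype.val hst))

theorem hp_le_hpp (n : ℕ) : hp n ≤ hpp n :=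
  Nat.card_le_card_of_injective _ (simpleSystemEmbedding n).injective

theorem hpp_le_two_pow_mul_bell (n : ℕ) : hpp n ≤ 2 ^ (n - 1) * bell n :=
  calc hpp n ≤ Nat.card ((range (n - 1)).powerset × Setoid (Fin n)) :=
        Nat.card_le_card_of_injective _ (encodeNormalized_injective n)
    _ = 2 ^ (n - 1) * bell n := by
        rw [Nat.card_prod, Nat.card_eq_finsetCard, card_powerset, card_range, bell]

theorem bell_le_hp_le_hpp_le_general (n : ℕ) :
    bell n ≤ hp n ∧ hp n ≤ hpp n ∧ hpp n ≤ 2 ^ (n - 1) * bell n :=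
  ⟨bell_le_hp n, hp_le_hpp n, hpp_le_two_pow_mul_bell n⟩

/-- For every `n ∈ ℕ = {1,2,…}`, `bₙ ≤ hₙ' ≤ hₙ'' ≤ 2^{n-1}·bₙ`. -/
theorem bell_le_hp_le_hpp_le (n : ℕ) (hn : 1 ≤ n) :
    bell n ≤ hp n ∧ hp n ≤ hpp n ∧ hpp n ≤ 2 ^ (n - 1) * bell n :=
  bell_le_hp_le_hpp_le_general n
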